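/- arXiv:2110.12206 — 4 statements merged into one kernel-verified Lean document; each statement's English description precedes it below -/
import Mathlib

section
/- If a, b, c, d are complex numbers of modulus one and a + b + c + d = 0, then a = -b or a = -c or a = -d. -/
/-!
Conjugation inverts numbers of modulus one, so `a⁻¹ + b⁻¹ + c⁻¹ + d⁻¹` is the conjugate of
`a + b + c + d = 0`, hence also vanishes. Clearing denominators, the third elementary symmetric
function of `a, b, c, d` vanishes along with the first, and then
`(a + b) (a + c) (a + d) = a² (a + b + c + d) + (abc + abd + acd + bcd) = 0`.
-/

open Finset ComplexConjugate

theorem RCLike.sum_inv_eq_zero_of_norm_eq_one {𝕜 ι : Type*} [RCLike 𝕜] {s : Finset ι}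
    {z : ι → 𝕜} (hz : ∀ i ∈ s, ‖z i‖ = 1) (hsum : ∑ i ∈ s, z i = 0) :
    ∑ i ∈ s, (z i)⁻¹ = 0 := by
  rw [sum_congr rfl fun i hi => RCLike.inv_eq_conj (hz i hi), ← map_sum, hsum, map_zero]

theorem eq_neg_of_add_eq_zero_of_inv_add_eq_zero {K : Type*} [Field K] {a b c d : K}
    (ha : a ≠ 0) (hb : b ≠ 0) (hc : c ≠ 0) (hd : d ≠ 0) (h : a + b + c + d = 0)
    (hinv : a⁻¹ + b⁻¹ + c⁻¹ + d⁻¹ = 0) : a = -b ∨ a = -c ∨ a = -d := by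
  have hsym₃ : b * c * d + a * c * d + a * b * d + a * b * c = 0 := by
    field_simp at hinv
    linear_combination hinv
  have hprod : (a + b) * (a + c) * (a + d) = 0 := by
    linear_combination a ^ 2 * h + hsym₃
  simp only [mul_eq_zero, ← eq_neg_iff_add_eq_zero] at hprod
  tauto

theorem stmt_1 (a b c d : ℂ) (ha : ‖a‖ = 1) (hb : ‖b‖ = 1)
    (hc : ‖c‖ = 1) (hd : ‖d‖ = 1)
    (h : a + b + c + d = 0) : a = -b ∨ a = -c ∨ a = -d := by
  have hne : ∀ z : ℂ, ‖z‖ = 1 → z ≠ 0 := fun z hz => norm_ne_zero_iff.mp (hz ▸ one_ne_zero)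
  refine eq_neg_of_add_eq_zero_of_inv_add_eq_zero (hne a ha) (hne b hb) (hne c hc) (hne d hd) h ?_
  have := RCLike.sum_inv_eq_zero_of_norm_eq_one (s := univ) (z := ![a, b, c, d])
    (by simp [Fin.forall_fin_succ, ha, hb, hc, hd]) (by simp [Fin.sum_univ_succ, ← add_assoc, h])
  simpa [Fin.sum_univ_succ, ← add_assoc] using this
end

section
/- Let ω = e^{2πi/3} and g₁,...,g₆ ∈ {1, ω, ω²}. Suppose k is a complex number of modulus one with g₁ + g₂ + g₃ + k(g₄ + g₅ + g₆) = 0. If not all of g₁, g₂, g₃ are equal and g₁ + g₂ + g₃ ≠ 0, then k ∈ {1, ω, ω², -1, -ω, -ω²}. -/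
/-!
Write `S = g₁ + g₂ + g₃` and `T = g₄ + g₅ + g₆`. For cube roots of unity `a ≠ b` one has
`a² + ab + b² = 0`, hence `(2a + b)⁶ = -27`; so a sum of three cube roots of unity is `0`
(all distinct), has sixth power `729` (all equal) or has sixth power `-27` (exactly two equal).
The hypotheses put `S` in the last case, and `S = -kT` with `‖k‖ = 1` leaves only the last case
for `T` as well. Then `k⁶ = S⁶ / T⁶ = 1`, and the sixth roots of unity are `±1, ±ω, ±ω²`.
-/

section CubeRoots

variable {R : Type*} [CommRing R] [IsDomain R]

theorem sq_add_mul_add_sq_eq_zero_of_pow_three_eq {a b : R} (h : a ^ 3 = b ^ 3) (hab : a ≠ b) :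
    a ^ 2 + a * b + b ^ 2 = 0 := by
  have : (a - b) * (a ^ 2 + a * b + b ^ 2) = 0 := by linear_combination h
  exact (mul_eq_zero.mp this).resolve_left (sub_ne_zero.mpr hab)

theorem add_add_eq_zero_of_pow_three_eq_one {a b c : R} (ha : a ^ 3 = 1) (hb : b ^ 3 = 1)
    (hc : c ^ 3 = 1) (hab : a ≠ b) (hac : a ≠ c) (hbc : b ≠ c) : a + b + c = 0 := by
  have hqb := sq_add_mul_add_sq_eq_zero_of_pow_three_eq (ha.trans hb.symm) hab
  have hqc := sq_add_mul_add_sq_eq_zero_of_pow_three_eq (ha.trans hc.symm) hac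
  have : (b - c) * (a + b + c) = 0 := by linear_combination hqb - hqc
  exact (mul_eq_zero.mp this).resolve_left (sub_ne_zero.mpr hbc)

theorem two_mul_add_pow_six_of_pow_three_eq_one {a b : R} (ha : a ^ 3 = 1) (hb : b ^ 3 = 1)
    (hab : a ≠ b) : (2 * a + b) ^ 6 = -27 := by
  have hq := sq_add_mul_add_sq_eq_zero_of_pow_three_eq (ha.trans hb.symm) hab
  -- `(2a + b)² = 3a(a + b)` and `(a + b)³ = -1` modulo `a² + ab + b² = 0`
  grind

theorem add_add_pow_six_of_not_all_eq {a b c : R} (ha : a ^ 3 = 1) (hb : b ^ 3 = 1)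
    (hc : c ^ 3 = 1) (hne : ¬(a = b ∧ b = c)) (hsum : a + b + c ≠ 0) :
    (a + b + c) ^ 6 = -27 := by
  by_cases hab : a = b
  · subst hab
    rw [show a + a + c = 2 * a + c by ring]
    exact two_mul_add_pow_six_of_pow_three_eq_one ha hc (by tauto)
  by_cases hac : a = c
  · subst hac
    rw [show a + b + a = 2 * a + b by ring]
    exact two_mul_add_pow_six_of_pow_three_eq_one ha hb hab
  by_cases hbc : b = c
  · subst hbc
    rw [show a + b + b = 2 * b + a by ring]
    exact two_mul_add_pow_six_of_pow_three_eq_one hb ha (Ne.symm hab)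
  exact absurd (add_add_eq_zero_of_pow_three_eq_one ha hb hc hab hac hbc) hsum

theorem add_add_eq_zero_or_pow_six {a b c : R} (ha : a ^ 3 = 1) (hb : b ^ 3 = 1)
    (hc : c ^ 3 = 1) :
    a + b + c = 0 ∨ (a + b + c) ^ 6 = 729 ∨ (a + b + c) ^ 6 = -27 := by
  by_cases hsum : a + b + c = 0
  · exact Or.inl hsum
  by_cases hne : a = b ∧ b = c
  · obtain ⟨rfl, rfl⟩ := hne
    exact Or.inr (Or.inl (by linear_combination (a ^ 3 + 1) * 729 * ha))
  exact Or.inr (Or.inr (add_add_pow_six_of_not_all_eq ha hb hc hne hsum))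

namespace IsPrimitiveRoot

theorem pow_three_eq_one_of_mem {M : Type*} [CommMonoid M] {ω g : M} (hω : IsPrimitiveRoot ω 3)
    (hg : g ∈ ({1, ω, ω ^ 2} : Set M)) : g ^ 3 = 1 := by
  rcases hg with rfl | rfl | rfl
  · exact one_pow 3
  · exact hω.pow_eq_one
  · rw [← pow_mul, mul_comm, pow_mul, hω.pow_eq_one, one_pow]

theorem mem_of_pow_six_eq_one {ω k : R} (hω : IsPrimitiveRoot ω 3) (hk : k ^ 6 = 1) :
    k ∈ ({1, ω, ω ^ 2, -1, -ω, -ω ^ 2} : Set R) := by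
  have hq : ω ^ 2 + ω + 1 = 0 := by
    have := hω.geom_sum_eq_zero (by norm_num)
    simp only [Finset.sum_range_succ, Finset.sum_range_zero] at this
    linear_combination this
  have hprod : (k - 1) * (k - ω) * (k - ω ^ 2) * (k + 1) * (k + ω) * (k + ω ^ 2) = k ^ 6 - 1 := by
    grind
  rw [hk, sub_self] at hprod
  simp only [mul_eq_zero, sub_eq_zero, add_eq_zero_iff_eq_neg] at hprod
  simp only [Set.mem_insert_iff, Set.mem_singleton_iff]
  tauto

end IsPrimitiveRoot

end CubeRoots

theorem stmt_2 (ω g₁ g₂ g₃ g₄ g₅ g₆ k : ℂ)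
    (hω : ω = Complex.exp (2 * Real.pi * Complex.I / 3))
    (h1 : g₁ ∈ ({1, ω, ω ^ 2} : Set ℂ)) (h2 : g₂ ∈ ({1, ω, ω ^ 2} : Set ℂ))
    (h3 : g₃ ∈ ({1, ω, ω ^ 2} : Set ℂ)) (h4 : g₄ ∈ ({1, ω, ω ^ 2} : Set ℂ))
    (h5 : g₅ ∈ ({1, ω, ω ^ 2} : Set ℂ)) (h6 : g₆ ∈ ({1, ω, ω ^ 2} : Set ℂ))
    (hk : ‖k‖ = 1)
    (heq : g₁ + g₂ + g₃ + k * (g₄ + g₅ + g₆) = 0)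
    (hne : ¬(g₁ = g₂ ∧ g₂ = g₃))
    (hsum : g₁ + g₂ + g₃ ≠ 0) :
    k ∈ ({1, ω, ω ^ 2, -1, -ω, -ω ^ 2} : Set ℂ) := by
  have hprim : IsPrimitiveRoot ω 3 := by
    simpa [hω] using Complex.isPrimitiveRoot_exp 3 (by norm_num)
  have hS := add_add_pow_six_of_not_all_eq (hprim.pow_three_eq_one_of_mem h1)
    (hprim.pow_three_eq_one_of_mem h2) (hprim.pow_three_eq_one_of_mem h3) hne hsum
  have hST : (g₁ + g₂ + g₃) ^ 6 = k ^ 6 * (g₄ + g₅ + g₆) ^ 6 := by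
    rw [show g₁ + g₂ + g₃ = -(k * (g₄ + g₅ + g₆)) by linear_combination heq]
    ring
  apply hprim.mem_of_pow_six_eq_one
  rcases add_add_eq_zero_or_pow_six (hprim.pow_three_eq_one_of_mem h4)
    (hprim.pow_three_eq_one_of_mem h5) (hprim.pow_three_eq_one_of_mem h6) with hT | hT | hT
  · exact absurd (by linear_combination heq - k * hT) hsum
  · have h27 : (-27 : ℂ) = k ^ 6 * 729 := hS ▸ hT ▸ hST
    have := congrArg norm h27
    norm_num [hk] at this
  · linear_combination (-1 / 27 : ℂ) * hS + (1 / 27 : ℂ) * hST + (1 / 27 : ℂ) * k ^ 6 * hT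
end

section
/- There is no 6×6 matrix H with all entries of modulus one such that H·H* = 6·I (i.e., H/√6 is unitary) and H has exactly two distinct entries. -/
/-!
Write `H = a + (b - a) X` with `X` a `0/1` matrix whose rows `xᵢ` have weights `wᵢ`, and put
`ζ = conj a * b`. Orthogonality of two distinct rows says `(1 - Re ζ) |xᵢ Δ xⱼ| = 6` and
`Im ζ (wᵢ - wⱼ) = 0`. If `ζ` is real then `ζ = -1`, so any two rows differ in exactly three
places; this is impossible for three binary vectors, whose pairwise Hamming distances have even sum.
Otherwise all rows have a common weight `w`, and `1 - Re ζ < 2` forces any two rows to share at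
most `w - 2` ones. Counting pairs of ones within columns and applying Cauchy–Schwarz to the column
sums then gives `6 w² ≤ 36 w - 60`, i.e. `(w - 3)² + 1 ≤ 0`.
-/

open Finset ComplexConjugate

lemma affine_mul_conj_affine {a b : ℂ} (ha : ‖a‖ = 1) (hb : ‖b‖ = 1) (x y : ℝ) :
    (a + (b - a) * x) * conj (a + (b - a) * y) =
      ((1 - (1 - (conj a * b).re) * (x + y - 2 * (x * y)) : ℝ) : ℂ) +
        ((conj a * b).im * (x - y) : ℝ) * Complex.I := by
  have haa : a * conj a = 1 := by simp [Complex.mul_conj', ha]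
  have hbb : b * conj b = 1 := by simp [Complex.mul_conj', hb]
  push_cast
  rw [Complex.re_eq_add_conj, Complex.im_eq_sub_conj]
  simp only [map_add, map_mul, map_sub, Complex.conj_ofReal, Complex.conj_conj]
  field_simp
  linear_combination (2 - 2 * x + 2 * x * y - 2 * y) * haa + 2 * x * y * hbb

section
variable {ι κ : Type*} [Fintype ι] [Fintype κ]

lemma sum_affine_mul_conj_affine_eq_zero_iff {a b : ℂ} (ha : ‖a‖ = 1) (hb : ‖b‖ = 1)
    (x y : κ → ℝ) :
    ∑ k, (a + (b - a) * x k) * conj (a + (b - a) * y k) = 0 ↔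
      (1 - (conj a * b).re) * (∑ k, x k + ∑ k, y k - 2 * ∑ k, x k * y k) = Fintype.card κ ∧
        (conj a * b).im * (∑ k, x k - ∑ k, y k) = 0 := by
  simp only [affine_mul_conj_affine ha hb, Complex.ext_iff, Complex.re_sum, Complex.im_sum,
    Complex.add_re, Complex.add_im, Complex.ofReal_re, Complex.ofReal_im, Complex.mul_I_re,
    Complex.mul_I_im, neg_zero, add_zero, zero_add, Complex.zero_re, Complex.zero_im]
  generalize (conj a * b).re = r
  generalize (conj a * b).im = t
  simp only [sum_sub_distrib, sum_add_distrib, ← mul_sum, sum_const, card_univ, nsmul_one,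
    sub_eq_zero, eq_comm (a := (Fintype.card κ : ℝ))]

lemma sq_card_mul_weight_le (x : ι → κ → ℤ) (hx : ∀ i k, x i k = 0 ∨ x i k = 1)
    {w : ℤ} (hw : ∀ i, ∑ k, x i k = w)
    (hdot : ∀ i j, i ≠ j → ∑ k, x i k * x j k ≤ w - 2) :
    (Fintype.card ι * w) ^ 2 ≤
      Fintype.card κ * (Fintype.card ι * (w + (Fintype.card ι - 1) * (w - 2))) := by
  classical
  have hsum : ∑ k, ∑ i, x i k = Fintype.card ι * w := by
    rw [sum_comm]
    simp [hw]
  have hsq : ∑ k, (∑ i, x i k) ^ 2 = ∑ i, ∑ j, ∑ k, x i k * x j k := by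
    simp only [sq, sum_mul_sum]
    rw [sum_comm]
    exact sum_congr rfl fun i _ => sum_comm
  have hrow : ∀ i, ∑ j, ∑ k, x i k * x j k ≤ w + (Fintype.card ι - 1) * (w - 2) := by
    intro i
    have hdiag : ∑ k, x i k * x i k = w := by
      rw [← hw i]
      exact sum_congr rfl fun k _ => by rcases hx i k with h | h <;> simp [h]
    have hoff :
        ∑ j ∈ univ.erase i, ∑ k, x i k * x j k ≤ (Fintype.card ι - 1) * (w - 2) := by
      calc ∑ j ∈ univ.erase i, ∑ k, x i k * x j k ≤ ∑ j ∈ univ.erase i, (w - 2) :=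
            sum_le_sum fun j hj => hdot i j (ne_of_mem_erase hj).symm
        _ = (Fintype.card ι - 1) * (w - 2) := by
            rw [sum_const, card_erase_of_mem (mem_univ i), card_univ, nsmul_eq_mul,
              Nat.cast_pred (Fintype.card_pos_iff.2 ⟨i⟩)]
    rw [← add_sum_erase _ _ (mem_univ i), hdiag]
    exact add_le_add_right hoff w
  calc (Fintype.card ι * w) ^ 2 = (∑ k, ∑ i, x i k) ^ 2 := by rw [hsum]
    _ ≤ Fintype.card κ * ∑ k, (∑ i, x i k) ^ 2 := by
      rw [← card_univ]
      exact sq_sum_le_card_mul_sum_sq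
    _ ≤ Fintype.card κ * (Fintype.card ι * (w + (Fintype.card ι - 1) * (w - 2))) := by
      rw [hsq]
      gcongr
      simpa using sum_le_sum fun i (_ : i ∈ univ) => hrow i

end

theorem false_of_binary_rows {x : Fin 6 → Fin 6 → ℤ} (hx : ∀ i k, x i k = 0 ∨ x i k = 1)
    {c : ℂ} (hc : ‖c‖ = 1) (hc1 : c ≠ 1)
    (hpair : ∀ i j, i ≠ j →
      (1 - c.re) * ((∑ k, x i k + ∑ k, x j k - 2 * ∑ k, x i k * x j k : ℤ) : ℝ) = 6 ∧
        c.im * ((∑ k, x i k - ∑ k, x j k : ℤ) : ℝ) = 0) : False := by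
  rcases eq_or_ne c.im 0 with him | him
  · have hre : c.re = -1 := by
      have habs : |c.re| = 1 := hc ▸ Complex.abs_re_eq_norm.2 him
      rcases abs_eq (zero_le_one' ℝ) |>.1 habs with h | h
      · exact absurd (Complex.ext (by simpa using h) (by simpa using him)) hc1
      · exact h
    have hdist :
        ∀ i j, i ≠ j → ∑ k, x i k + ∑ k, x j k - 2 * ∑ k, x i k * x j k = 3 := by
      intro i j hij
      have h := (hpair i j hij).1
      refine Int.cast_inj (α := ℝ) |>.1 ?_
      rw [hre] at h
      push_cast at h ⊢
      linarith
    have h01 := hdist 0 1 (by decide)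
    have h02 := hdist 0 2 (by decide)
    have h12 := hdist 1 2 (by decide)
    omega
  · have hre : |c.re| < 1 := hc ▸ Complex.abs_re_lt_norm.2 him
    have hw : ∀ i, ∑ k, x i k = ∑ k, x 0 k := fun i => by
      by_cases hi : i = 0
      · rw [hi]
      · have h := (mul_eq_zero.1 (hpair i 0 hi).2).resolve_left him
        exact sub_eq_zero.1 (by exact_mod_cast h)
    have hdot : ∀ i j, i ≠ j → ∑ k, x i k * x j k ≤ ∑ k, x 0 k - 2 := by
      intro i j hij
      have h := (hpair i j hij).1
      rw [hw i, hw j] at h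
      suffices (3 : ℤ) < ∑ k, x 0 k + ∑ k, x 0 k - 2 * ∑ k, x i k * x j k by omega
      refine Int.cast_lt (R := ℝ) |>.1 ?_
      push_cast at h ⊢
      nlinarith [abs_lt.1 hre]
    have h := sq_card_mul_weight_le x hx hw hdot
    simp only [Fintype.card_fin, Nat.cast_ofNat] at h
    nlinarith [sq_nonneg (∑ k, x 0 k - 3)]

theorem false_of_two_valued_of_rows_orthogonal {H : Matrix (Fin 6) (Fin 6) ℂ} {a b : ℂ}
    (ha : ‖a‖ = 1) (hb : ‖b‖ = 1) (hab : a ≠ b) (hH : ∀ i k, H i k = a ∨ H i k = b)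
    (horth : ∀ i j, i ≠ j → ∑ k, H i k * conj (H j k) = 0) : False := by
  set x : Fin 6 → Fin 6 → ℤ := fun i k => if H i k = b then 1 else 0
  have hHx : ∀ i k, H i k = a + (b - a) * ((x i k : ℝ) : ℂ) := fun i k => by
    rcases hH i k with h | h <;> simp [x, h, hab]
  refine false_of_binary_rows (x := x) (c := conj a * b)
    (fun i k => by by_cases h : H i k = b <;> simp [x, h]) (by simp [ha, hb]) ?_ fun i j hij => ?_
  · intro hc
    apply hab
    calc a = a * (conj a * b) := by rw [hc, mul_one]
      _ = b := by rw [← mul_assoc, Complex.mul_conj', ha]; simp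
  · have h := (sum_affine_mul_conj_affine_eq_zero_iff ha hb (fun k => (x i k : ℝ))
      (fun k => (x j k : ℝ))).1 (by simpa only [hHx] using horth i j hij)
    push_cast
    simpa only [Fintype.card_fin, Nat.cast_ofNat] using h

theorem stmt_6 :
    ¬ ∃ H : Matrix (Fin 6) (Fin 6) ℂ,
      (∀ i j, ‖H i j‖ = 1) ∧
      H * H.conjTranspose = (6 : ℂ) • 1 ∧
      (Finset.univ.image fun p : Fin 6 × Fin 6 => H p.1 p.2).card = 2 := by
  rintro ⟨H, hnorm, hHH, hcard⟩
  obtain ⟨a, b, hab, himage⟩ := Finset.card_eq_two.1 hcard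
  have hmem : ∀ i k, H i k ∈ ({a, b} : Finset ℂ) := fun i k =>
    himage ▸ mem_image_of_mem _ (mem_univ (i, k))
  have hval : ∀ z ∈ ({a, b} : Finset ℂ), ‖z‖ = 1 := by
    rw [← himage, forall_mem_image]
    exact fun p _ => hnorm p.1 p.2
  refine false_of_two_valued_of_rows_orthogonal (hval a (by simp)) (hval b (by simp)) hab
    (fun i k => by simpa using hmem i k) fun i j hij => ?_
  simpa [Matrix.mul_apply, Matrix.one_apply_ne hij] using congrFun (congrFun hHH i) j
end

section
/- There is no 6×6 complex Hadamard matrix containing a 3×3 submatrix all of whose entries are equal (equivalently, a 3×3 rank-one submatrix with constant unimodular ratios cannot occur as specified: if three rows of a 6×6 CHM agree up to a unimodular scalar on three common columns, a contradiction arises). Precisely: there do not exist a 6×6 matrix H with unimodular entries satisfying H·H* = 6·I, three distinct row indices r₁, r₂, r₃, three distinct column indices c₁, c₂, c₃, and unimodular scalars λ₂, λ₃ such that H(r₂, cⱼ) = λ₂·H(r₁, cⱼ) and H(r₃, cⱼ) = λ₃·H(r₁, cⱼ) for j = 1, 2, 3. -/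
/-!
If two orthogonal rows `u`, `v` with unimodular entries satisfy `v = a • u` on a set `s` of half
the columns, then the part of `∑ v * conj u` over `sᶜ` is a sum of `|sᶜ|` unimodular numbers
equal to `-|sᶜ| a`; equality in the triangle inequality forces `v = -a • u` on `sᶜ`. Applied to
rows `r₂` and `r₃` against row `r₁`, this gives `H r₂ c * conj (H r₃ c) = l₂ * conj l₃` in every
column, so rows `r₂` and `r₃` are not orthogonal.
-/

open Finset ComplexConjugate
open scoped Matrix

namespace Complex

theorem eq_one_of_sum_eq_card {ι : Type*} {s : Finset ι} {z : ι → ℂ}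
    (hz : ∀ i ∈ s, ‖z i‖ = 1) (hsum : ∑ i ∈ s, z i = s.card) : ∀ i ∈ s, z i = 1 := by
  have hre : ∀ i ∈ s, (z i).re = 1 := by
    refine (sum_eq_sum_iff_of_le fun i hi ↦ (re_le_norm _).trans_eq (hz i hi)).1 ?_
    simpa [re_sum] using congrArg re hsum
  intro i hi
  have him : (z i).im = 0 := abs_re_eq_norm.1 (by rw [hre i hi, hz i hi, abs_one])
  exact ext (hre i hi) him

theorem mul_conj_eq_of_eq_mul {u v w a b : ℂ} (hu : ‖u‖ = 1) (hv : v = a * u)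
    (hw : w = b * u) : v * conj w = a * conj b := by
  have hu' : u * conj u = 1 := by rw [mul_conj', hu]; norm_num
  rw [hv, hw, map_mul]
  linear_combination (a * conj b) * hu'

end Complex

section Rows

variable {ι : Type*} [Fintype ι] [DecidableEq ι]

theorem eq_neg_mul_on_compl_of_sum_mul_conj_eq_zero {u v : ι → ℂ} (hu : ∀ i, ‖u i‖ = 1)
    (hv : ∀ i, ‖v i‖ = 1) (horth : ∑ i, v i * conj (u i) = 0) {s : Finset ι}
    (hs : sᶜ.card = s.card) {a : ℂ} (ha : ‖a‖ = 1) (hvs : ∀ i ∈ s, v i = a * u i) :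
    ∀ i ∈ sᶜ, v i = -a * u i := by
  have hconj : ∀ {z : ℂ}, ‖z‖ = 1 → z * conj z = 1 := fun hz ↦ by
    rw [Complex.mul_conj', hz]; norm_num
  have hsum_s : ∑ i ∈ s, v i * conj (u i) = s.card * a := by
    rw [sum_congr rfl fun i hi ↦ by
      simpa using Complex.mul_conj_eq_of_eq_mul (hu i) (hvs i hi) (one_mul _).symm]
    simp
  have hsum_compl : ∑ i ∈ sᶜ, -conj a * (v i * conj (u i)) = sᶜ.card := by
    have hsplit := sum_add_sum_compl s fun i ↦ v i * conj (u i)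
    rw [horth, hsum_s] at hsplit
    rw [← mul_sum, hs]
    linear_combination (-conj a) * hsplit + s.card * hconj ha
  intro i hi
  have h := Complex.eq_one_of_sum_eq_card (fun i _ ↦ by simp [hu, hv, ha]) hsum_compl i hi
  linear_combination (-a * u i) * h - v i * u i * conj (u i) * hconj ha - v i * hconj (hu i)

theorem sum_mul_conj_ne_zero_of_eq_mul_on_half [Nonempty ι] {u v w : ι → ℂ}
    (hu : ∀ i, ‖u i‖ = 1) (hv : ∀ i, ‖v i‖ = 1) (hw : ∀ i, ‖w i‖ = 1)
    (huv : ∑ i, v i * conj (u i) = 0) (huw : ∑ i, w i * conj (u i) = 0) {s : Finset ι}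
    (hs : sᶜ.card = s.card) {a b : ℂ} (ha : ‖a‖ = 1) (hb : ‖b‖ = 1)
    (hvs : ∀ i ∈ s, v i = a * u i) (hws : ∀ i ∈ s, w i = b * u i) :
    ∑ i, v i * conj (w i) ≠ 0 := by
  have hvs' := eq_neg_mul_on_compl_of_sum_mul_conj_eq_zero hu hv huv hs ha hvs
  have hws' := eq_neg_mul_on_compl_of_sum_mul_conj_eq_zero hu hw huw hs hb hws
  have hterm : ∀ i, v i * conj (w i) = a * conj b := by
    intro i
    by_cases hi : i ∈ s
    · exact Complex.mul_conj_eq_of_eq_mul (hu i) (hvs i hi) (hws i hi)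
    · have hi' := mem_compl.2 hi
      simpa using Complex.mul_conj_eq_of_eq_mul (hu i) (hvs' i hi') (hws' i hi')
  rw [sum_congr rfl fun i _ ↦ hterm i, sum_const, card_univ]
  have ha0 : a ≠ 0 := norm_ne_zero_iff.1 (by simp [ha])
  have hb0 : b ≠ 0 := norm_ne_zero_iff.1 (by simp [hb])
  simp [Fintype.card_ne_zero, ha0, hb0]

theorem Matrix.sum_mul_conj_eq_zero_of_mul_conjTranspose_eq_smul_one {H : Matrix ι ι ℂ}
    {d : ℂ} (hH : H * Hᴴ = d • 1) {i j : ι} (hij : i ≠ j) :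
    ∑ k, H i k * conj (H j k) = 0 := by
  simpa [Matrix.mul_apply, Matrix.one_apply_ne hij] using congrFun (congrFun hH i) j

end Rows

theorem stmt_11 :
    ¬ ∃ (H : Matrix (Fin 6) (Fin 6) ℂ) (r₁ r₂ r₃ c₁ c₂ c₃ : Fin 6) (l₂ l₃ : ℂ),
      (∀ i j, ‖H i j‖ = 1) ∧
      H * H.conjTranspose = (6 : ℂ) • 1 ∧
      r₁ ≠ r₂ ∧ r₁ ≠ r₃ ∧ r₂ ≠ r₃ ∧
      c₁ ≠ c₂ ∧ c₁ ≠ c₃ ∧ c₂ ≠ c₃ ∧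
      ‖l₂‖ = 1 ∧ ‖l₃‖ = 1 ∧
      (∀ c ∈ ({c₁, c₂, c₃} : Set (Fin 6)), H r₂ c = l₂ * H r₁ c ∧ H r₃ c = l₃ * H r₁ c) := by
  rintro ⟨H, r₁, r₂, r₃, c₁, c₂, c₃, l₂, l₃, hH, hHH, hr₁₂, hr₁₃, hr₂₃, hc₁₂, hc₁₃, hc₂₃,
    hl₂, hl₃, hblock⟩
  have horth {i j : Fin 6} (hij : i ≠ j) : ∑ k, H i k * conj (H j k) = 0 :=
    Matrix.sum_mul_conj_eq_zero_of_mul_conjTranspose_eq_smul_one hHH hij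
  set S : Finset (Fin 6) := {c₁, c₂, c₃}
  have hcard : S.card = 3 := card_eq_three.2 ⟨_, _, _, hc₁₂, hc₁₃, hc₂₃, rfl⟩
  have hblockS (c : Fin 6) (hc : c ∈ S) : H r₂ c = l₂ * H r₁ c ∧ H r₃ c = l₃ * H r₁ c :=
    hblock c (by simpa [S] using hc)
  exact sum_mul_conj_ne_zero_of_eq_mul_on_half (hH r₁) (hH r₂) (hH r₃) (horth hr₁₂.symm)
    (horth hr₁₃.symm) (by rw [card_compl, hcard]; rfl) hl₂ hl₃ (fun c hc ↦ (hblockS c hc).1)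
    (fun c hc ↦ (hblockS c hc).2) (horth hr₂₃)
end
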